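/- Let ε ∈ [0,1), let S ⊆ H with |S| > 1, and let T be any query tree whose leaves contain S. If a question q_i satisfies Δ_i(S, π_S)/c_i ≥ (1−ε) · max_j Δ_j(S, π_S)/c_j (an ε-approximately greedy choice), then Δ_i(S, π_S)/c_i ≥ (1−ε) · (1 − CP(π_S)) / C(T, π_S). -/

import Mathlib

open Finset

namespace ActiveLearning

variable {H A : Type*} {m : ℕ}

/-- The total mass of a weight function `v` on a finite set `S`. -/
def mass (v : H → ℝ) (S : Finset H) : ℝ := ∑ s ∈ S, v s

/-- `v` restricted to `S` and normalized. -/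
noncomputable def restrict [DecidableEq H] (v : H → ℝ) (S : Finset H) : H → ℝ :=
  fun h => if h ∈ S then v h / mass v S else 0

/-- The shrinkage `Δ` of a question `qi` on `(S, v)`. -/
noncomputable def shrink [Fintype A] [DecidableEq A] (qi : H → A)
    (S : Finset H) (v : H → ℝ) : ℝ :=
  mass v S - ∑ j : A, (mass v (S.filter fun s => qi s = j)) ^ 2 / mass v S

/-- The collision probability of a distribution `v`. -/
def CP [Fintype H] (v : H → ℝ) : ℝ := ∑ z : H, (v z) ^ 2

/-- Query trees: internal nodes are questions (indexed by `Fin m`), branches are answers,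
leaves are hypotheses. -/
inductive QTree (m : ℕ) (H A : Type*) : Type _
  | leaf : H → QTree m H A
  | node : Fin m → (A → QTree m H A) → QTree m H A

/-- Follow the answers of hypothesis `h` down the tree, returning the leaf reached. -/
def follow (q : Fin m → H → A) : QTree m H A → H → H
  | .leaf h', _ => h'
  | .node i ch, h => follow q (ch (q i h)) h

/-- The cost `c_T(h)`: sum of costs of the questions on the root-to-`h` path. -/
def pathCost (q : Fin m → H → A) (c : Fin m → ℝ) : QTree m H A → H → ℝ
  | .leaf _, _ => 0
  | .node i ch, h => c i + pathCost q c (ch (q i h)) h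

/-- The leaves of `T` include `S`: every `h ∈ S` is identified by `T`. -/
def ValidOn (q : Fin m → H → A) (T : QTree m H A) (S : Finset H) : Prop :=
  ∀ h ∈ S, follow q T h = h

/-- The expected cost `C(T, v)` of a query tree `T` under weights `v`. -/
noncomputable def treeCost [Fintype H] (q : Fin m → H → A) (c : Fin m → ℝ)
    (T : QTree m H A) (v : H → ℝ) : ℝ :=
  ∑ h : H, v h * pathCost q c T h

/-- The questions asked along the root-to-`h` path. -/
def pathQs (q : Fin m → H → A) : QTree m H A → H → List (Fin m)
  | .leaf _, _ => []
  | .node i ch, h => i :: pathQs q (ch (q i h)) h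

/-- `T` is a greedy query tree for `π` on version space `S`: at every node it asks a question
maximizing the shrinkage-cost ratio and recurses on each nonempty answer class. -/
inductive IsGreedy [Fintype A] [DecidableEq A] [DecidableEq H]
    (q : Fin m → H → A) (c : Fin m → ℝ) (π : H → ℝ) :
    QTree m H A → Finset H → Prop
  | leaf (h : H) : IsGreedy q c π (.leaf h) {h}
  | node (S : Finset H) (i : Fin m) (ch : A → QTree m H A)
      (hcard : 1 < S.card)
      (hmax : ∀ j : Fin m,
        shrink (q j) S (restrict π S) / c j ≤ shrink (q i) S (restrict π S) / c i)
      (hch : ∀ a : A, (S.filter fun s => q i s = a).Nonempty →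
        IsGreedy q c π (ch a) (S.filter fun s => q i s = a)) :
      IsGreedy q c π (.node i ch) S

/-- `T` is an `ε`-approximate greedy query tree for `π` on version space `S`. -/
inductive IsApproxGreedy [Fintype A] [DecidableEq A] [DecidableEq H]
    (ε : ℝ) (q : Fin m → H → A) (c : Fin m → ℝ) (π : H → ℝ) :
    QTree m H A → Finset H → Prop
  | leaf (h : H) : IsApproxGreedy ε q c π (.leaf h) {h}
  | node (S : Finset H) (i : Fin m) (ch : A → QTree m H A)
      (hcard : 1 < S.card)
      (happrox : ∀ j : Fin m,
        (1 - ε) * (shrink (q j) S (restrict π S) / c j) ≤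
          shrink (q i) S (restrict π S) / c i)
      (hch : ∀ a : A, (S.filter fun s => q i s = a).Nonempty →
        IsApproxGreedy ε q c π (ch a) (S.filter fun s => q i s = a)) :
      IsApproxGreedy ε q c π (.node i ch) S

/-- `T` is irreducible on version space `S`: every asked question strictly splits the
surviving set. -/
inductive Irreducible [DecidableEq A] (q : Fin m → H → A) :
    QTree m H A → Finset H → Prop
  | leaf (h : H) (S : Finset H) : Irreducible q (.leaf h) S
  | node (S : Finset H) (i : Fin m) (ch : A → QTree m H A)
      (hsplit : ∃ s ∈ S, ∃ t ∈ S, q i s ≠ q i t)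
      (hch : ∀ a : A, (S.filter fun s => q i s = a).Nonempty →
        Irreducible q (ch a) (S.filter fun s => q i s = a)) :
      Irreducible q (.node i ch) S

/-!
The unnormalized impurity `I(S) = π(S)² − Σ_{h∈S} π(h)²` of a set splits along any question `q`
as `I(S) = π(S)·Δ_q(S, π) + Σ_a I(S^a)`. Unfolding this along a query tree `T` identifying `S`
charges, at every node with question `q_j` and surviving set `S'`, an amount `π(S')·Δ_j(S', π)`,
while that node contributes `π(S')·c_j` to the cost `C(T, π)`. Shrinkage is monotone in the
surviving set, so `Δ_j(S', π) ≤ Δ_j(S, π) ≤ c_j·Δ_i(S, π)/((1 − ε)c_i)` by approximate greediness.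
Summing over the nodes gives `(1 − ε)·I(S) ≤ (Δ_i/c_i)·C(T, π)`, and `I(S) = 1 − CP(π_S)` after
normalization.
-/

theorem sq_sum_sub_sum_sq_div_sum_le {ι : Type*} (s : Finset ι) {f g : ι → ℝ}
    (hf : ∀ i ∈ s, 0 ≤ f i) (hfg : ∀ i ∈ s, f i ≤ g i) :
    ((∑ i ∈ s, f i) ^ 2 - ∑ i ∈ s, f i ^ 2) / ∑ i ∈ s, f i ≤
      ((∑ i ∈ s, g i) ^ 2 - ∑ i ∈ s, g i ^ 2) / ∑ i ∈ s, g i := by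
  set F := ∑ i ∈ s, f i
  set G := ∑ i ∈ s, g i
  set A := ∑ i ∈ s, f i ^ 2
  have hg : ∀ i ∈ s, 0 ≤ g i := fun i hi => (hf i hi).trans (hfg i hi)
  have hF : 0 ≤ F := sum_nonneg hf
  rcases hF.eq_or_lt with hF0 | hFpos
  · rw [← hF0, div_zero]
    exact div_nonneg (sub_nonneg.2 (sum_sq_le_sq_sum_of_nonneg hg)) (sum_nonneg hg)
  have hGpos : 0 < G := hFpos.trans_le (sum_le_sum hfg)
  have hGF : G - F = ∑ i ∈ s, (g i - f i) := (sum_sub_distrib _ _).symm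
  -- `F·(g² − f²) = (g − f)·F(f + g)`, and `F(f + g) ≤ f² + FG` holds pointwise.
  have key : F * (∑ i ∈ s, g i ^ 2 - A) ≤ (G - F) * (A + F * G) := by
    rw [hGF, ← sum_sub_distrib, mul_sum, sum_mul]
    refine sum_le_sum fun i hi => ?_
    have hfF : f i ≤ F := single_le_sum hf hi
    have hfA : f i ^ 2 ≤ A := single_le_sum (fun j _ => sq_nonneg (f j)) hi
    have hdD : g i - f i ≤ G - F :=
      hGF ▸ single_le_sum (fun j hj => sub_nonneg.2 (hfg j hj)) hi
    have hd : 0 ≤ g i - f i := sub_nonneg.2 (hfg i hi)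
    nlinarith [sq_nonneg (F - f i), mul_le_mul_of_nonneg_left hdD hFpos.le]
  rw [div_le_div_iff₀ hFpos hGpos]
  linear_combination key

section Mass

variable {v : H → ℝ}

theorem mass_nonneg (hv : ∀ h, 0 ≤ v h) (S : Finset H) : 0 ≤ mass v S :=
  sum_nonneg fun h _ => hv h

theorem mass_mono (hv : ∀ h, 0 ≤ v h) {S S' : Finset H} (hSS' : S' ⊆ S) :
    mass v S' ≤ mass v S :=
  sum_le_sum_of_subset_of_nonneg hSS' fun h _ _ => hv h

theorem sum_mass_fiber [Fintype A] [DecidableEq A] (qi : H → A) (S : Finset H) :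
    ∑ a : A, mass v (S.filter fun s => qi s = a) = mass v S :=
  sum_fiberwise S qi v

end Mass

section Shrink

variable [Fintype A] [DecidableEq A] {v : H → ℝ}

theorem shrink_eq_div (qi : H → A) (S : Finset H) :
    shrink qi S v =
      (mass v S ^ 2 - ∑ a : A, mass v (S.filter fun s => qi s = a) ^ 2) / mass v S := by
  rw [shrink, sub_div, sq, mul_self_div_self, sum_div]

theorem shrink_mono (qi : H → A) (hv : ∀ h, 0 ≤ v h) {S S' : Finset H} (hSS' : S' ⊆ S) :
    shrink qi S' v ≤ shrink qi S v := by
  rw [shrink_eq_div, shrink_eq_div, ← sum_mass_fiber qi S', ← sum_mass_fiber qi S]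
  exact sq_sum_sub_sum_sq_div_sum_le _ (fun a _ => mass_nonneg hv _)
    fun a _ => mass_mono hv (filter_subset_filter _ hSS')

theorem shrink_nonneg (qi : H → A) (hv : ∀ h, 0 ≤ v h) (S : Finset H) :
    0 ≤ shrink qi S v := by
  simpa [shrink, mass] using shrink_mono qi hv (empty_subset S)

theorem mass_mul_shrink (qi : H → A) (hv : ∀ h, 0 ≤ v h) (S : Finset H) :
    mass v S * shrink qi S v =
      mass v S ^ 2 - ∑ a : A, mass v (S.filter fun s => qi s = a) ^ 2 := by
  rw [shrink_eq_div]
  rcases (mass_nonneg hv S).eq_or_lt with h0 | hpos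
  · have hfiber : ∀ a : A, mass v (S.filter fun s => qi s = a) = 0 := fun a =>
      le_antisymm (h0 ▸ mass_mono hv (filter_subset _ S)) (mass_nonneg hv _)
    simp [← h0, hfiber]
  · exact mul_div_cancel₀ _ hpos.ne'

end Shrink

/-- `π(S)² − Σ_{h∈S} π(h)²`, the mass of ordered pairs of distinct elements of `S`. -/
def impurity (v : H → ℝ) (S : Finset H) : ℝ := mass v S ^ 2 - ∑ h ∈ S, v h ^ 2

theorem impurity_eq_mass_mul_shrink_add [Fintype A] [DecidableEq A] {v : H → ℝ}
    (qi : H → A) (hv : ∀ h, 0 ≤ v h) (S : Finset H) :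
    impurity v S =
      mass v S * shrink qi S v + ∑ a : A, impurity v (S.filter fun s => qi s = a) := by
  rw [mass_mul_shrink qi hv]
  unfold impurity
  rw [← sum_fiberwise S qi (fun h => v h ^ 2), sum_sub_distrib]
  ring

theorem impurity_eq_zero_of_subset_singleton {v : H → ℝ} {S : Finset H} {h₀ : H}
    (hS : S ⊆ {h₀}) : impurity v S = 0 := by
  rcases subset_singleton_iff.mp hS with rfl | rfl <;> simp [impurity, mass]

section Tree

variable {q : Fin m → H → A} {c : Fin m → ℝ}

theorem ValidOn.subset_singleton {h₀ : H} {S : Finset H} (hT : ValidOn q (.leaf h₀) S) :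
    S ⊆ {h₀} :=
  fun h hh => mem_singleton.2 (hT h hh).symm

theorem ValidOn.child [DecidableEq A] {j : Fin m} {ch : A → QTree m H A} {S : Finset H}
    (hT : ValidOn q (.node j ch) S) (a : A) :
    ValidOn q (ch a) (S.filter fun s => q j s = a) := by
  intro h hh
  obtain ⟨hS, rfl⟩ := mem_filter.1 hh
  exact hT h hS

theorem pathCost_nonneg (hc : ∀ j, 0 ≤ c j) (T : QTree m H A) (h : H) :
    0 ≤ pathCost q c T h := by
  induction T with
  | leaf => exact le_rfl
  | node j ch ih => exact add_nonneg (hc j) (ih _)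

theorem treeCost_nonneg [Fintype H] {v : H → ℝ} (hv : ∀ h, 0 ≤ v h) (hc : ∀ j, 0 ≤ c j)
    (T : QTree m H A) : 0 ≤ treeCost q c T v :=
  sum_nonneg fun h _ => mul_nonneg (hv h) (pathCost_nonneg hc T h)

theorem sum_mul_pathCost_node [Fintype A] [DecidableEq A] (v : H → ℝ) (j : Fin m)
    (ch : A → QTree m H A) (S : Finset H) :
    ∑ h ∈ S, v h * pathCost q c (.node j ch) h =
      c j * mass v S +
        ∑ a : A, ∑ h ∈ S.filter (fun s => q j s = a), v h * pathCost q c (ch a) h := by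
  simp only [pathCost, mul_add, sum_add_distrib, mass, mul_sum]
  congr 1
  · exact sum_congr rfl fun h _ => mul_comm _ _
  · rw [← sum_fiberwise S (q j)]
    exact sum_congr rfl fun a _ => sum_congr rfl fun h hh => by rw [(mem_filter.1 hh).2]

theorem mul_impurity_le_mul_sum_pathCost [Fintype A] [DecidableEq A] {v : H → ℝ}
    (hv : ∀ h, 0 ≤ v h) {S : Finset H} {κ ρ : ℝ} (hκ : 0 ≤ κ)
    (hb : ∀ j, κ * shrink (q j) S v ≤ ρ * c j) (T : QTree m H A) :
    ∀ S' ⊆ S, ValidOn q T S' →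
      κ * impurity v S' ≤ ρ * ∑ h ∈ S', v h * pathCost q c T h := by
  induction T with
  | leaf h₀ =>
    intro S' _ hT
    simp [impurity_eq_zero_of_subset_singleton hT.subset_singleton, pathCost]
  | node j ch ih =>
    intro S' hS' hT
    rw [impurity_eq_mass_mul_shrink_add (q j) hv, sum_mul_pathCost_node, mul_add, mul_add,
      mul_sum, mul_sum]
    have hM := mass_nonneg hv S'
    refine add_le_add ?_
      (sum_le_sum fun a _ => ih a _ ((filter_subset _ _).trans hS') (hT.child a))
    calc κ * (mass v S' * shrink (q j) S' v)
        = mass v S' * (κ * shrink (q j) S' v) := by ring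
      _ ≤ mass v S' * (κ * shrink (q j) S v) :=
        mul_le_mul_of_nonneg_left (mul_le_mul_of_nonneg_left (shrink_mono (q j) hv hS') hκ) hM
      _ ≤ mass v S' * (ρ * c j) := mul_le_mul_of_nonneg_left (hb j) hM
      _ = ρ * (c j * mass v S') := by ring

end Tree

section Restrict

variable [DecidableEq H] {v : H → ℝ} {S : Finset H}

theorem restrict_of_mem {h : H} (hh : h ∈ S) : restrict v S h = v h / mass v S := if_pos hh

theorem restrict_eq_zero_of_notMem {h : H} (hh : h ∉ S) : restrict v S h = 0 := if_neg hh

theorem restrict_nonneg (hv : ∀ h, 0 ≤ v h) (h : H) : 0 ≤ restrict v S h := by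
  by_cases hh : h ∈ S
  · exact (restrict_of_mem hh).symm ▸ div_nonneg (hv h) (mass_nonneg hv S)
  · exact (restrict_eq_zero_of_notMem hh).symm ▸ le_rfl

theorem mass_restrict_self (hS : mass v S ≠ 0) : mass (restrict v S) S = 1 := by
  rw [mass, sum_congr rfl fun h hh => restrict_of_mem hh, ← sum_div]
  exact div_self hS

theorem sum_restrict_mul_eq_sum_univ [Fintype H] (f : H → ℝ) :
    ∑ h ∈ S, restrict v S h * f h = ∑ h : H, restrict v S h * f h :=
  sum_subset (subset_univ S) fun _ _ hh => by rw [restrict_eq_zero_of_notMem hh, zero_mul]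

theorem impurity_restrict_self [Fintype H] (hS : mass v S ≠ 0) :
    impurity (restrict v S) S = 1 - CP (restrict v S) := by
  simp only [impurity, mass_restrict_self hS, CP, sq, sum_restrict_mul_eq_sum_univ, mul_one]

end Restrict

theorem approx_greedy_shrink_bound_general [Fintype H] [Fintype A] [DecidableEq H] [DecidableEq A]
    (π : H → ℝ) (hπpos : ∀ h, 0 < π h)
    (q : Fin m → H → A) (c : Fin m → ℝ) (hc : ∀ i, 0 < c i)
    (ε : ℝ) (hε1 : ε < 1)
    (S : Finset H) (hS : 1 < S.card)
    (T : QTree m H A) (hT : ValidOn q T S)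
    (i : Fin m)
    (hi : ∀ j : Fin m,
      (1 - ε) * (shrink (q j) S (restrict π S) / c j) ≤
        shrink (q i) S (restrict π S) / c i) :
    (1 - ε) * (1 - CP (restrict π S)) / treeCost q c T (restrict π S) ≤
      shrink (q i) S (restrict π S) / c i := by
  set v := restrict π S
  have hmass : mass π S ≠ 0 :=
    (sum_pos (fun h _ => hπpos h) (card_pos.1 (by omega))).ne'
  have hv : ∀ h, 0 ≤ v h := restrict_nonneg fun h => (hπpos h).le
  have hb : ∀ j, (1 - ε) * shrink (q j) S v ≤ shrink (q i) S v / c i * c j := fun j => by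
    rw [← div_le_iff₀ (hc j), mul_div_assoc]
    exact hi j
  have hbound := mul_impurity_le_mul_sum_pathCost hv (sub_nonneg.2 hε1.le) hb T S
    subset_rfl hT
  rw [impurity_restrict_self hmass, sum_restrict_mul_eq_sum_univ] at hbound
  exact div_le_of_le_mul₀ (treeCost_nonneg hv (fun j => (hc j).le) T)
    (div_nonneg (shrink_nonneg _ hv S) (hc i).le) hbound

/-- If `ε ∈ [0,1)`, `|S| > 1`, `T` is any query tree whose leaves contain
`S`, and `q_i` is an `ε`-approximately greedy choice, i.e.
`Δ_i(S, π_S)/c_i ≥ (1−ε)·Δ_j(S, π_S)/c_j` for all `j`, then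
`Δ_i(S, π_S)/c_i ≥ (1−ε)·(1 − CP(π_S)) / C(T, π_S)`. -/
theorem approx_greedy_shrink_bound [Fintype H] [Fintype A] [DecidableEq H] [DecidableEq A]
    (π : H → ℝ) (hπpos : ∀ h, 0 < π h) (hπsum : ∑ h : H, π h = 1)
    (hH : 1 < Fintype.card H)
    (q : Fin m → H → A) (c : Fin m → ℝ) (hc : ∀ i, 0 < c i)
    (ε : ℝ) (hε0 : 0 ≤ ε) (hε1 : ε < 1)
    (S : Finset H) (hS : 1 < S.card)
    (T : QTree m H A) (hT : ValidOn q T S)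
    (i : Fin m)
    (hi : ∀ j : Fin m,
      (1 - ε) * (shrink (q j) S (restrict π S) / c j) ≤
        shrink (q i) S (restrict π S) / c i) :
    (1 - ε) * (1 - CP (restrict π S)) / treeCost q c T (restrict π S) ≤
      shrink (q i) S (restrict π S) / c i :=
  approx_greedy_shrink_bound_general π hπpos q c hc ε hε1 S hS T hT i hi

end ActiveLearning
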